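/- arXiv:1801.06570 — 2 statements merged into one kernel-verified Lean document; each statement's English description precedes it below -/
import Mathlib

section
/- Let {A_n} be a sequence of n×n symmetric matrices with nonnegative entries and zeros on the diagonal satisfying (BD) and (NT), let β > 0 and B₀ ≠ 0 with (β, B₀) ∈ Θ, and suppose β is known. Then with P_{n,β,B₀}-probability tending to 1, the one-dimensional equation R_n(β, B | X) = 0 has a unique root B̂_n ∈ ℝ, and √n(B̂_n − B₀) = O_p(1) under P_{n,β,B₀}: for every ε > 0 there exists M < ∞ with limsup_{n→∞} P_{n,β,B₀}( the root fails to exist uniquely, or √n |B̂_n − B₀| > M ) ≤ ε. -/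
open Filter

noncomputable section

/-- Spin configuration in `{-1,1}^n` encoded by a Boolean vector. -/
def spinVec (n : ℕ) (σ : Fin n → Bool) : Fin n → ℝ := fun i => if σ i then 1 else -1

/-- Local field `m_i(x) = ∑_j A i j * x j`. -/
def mloc {n : ℕ} (A : Matrix (Fin n) (Fin n) ℝ) (x : Fin n → ℝ) (i : Fin n) : ℝ :=
  ∑ j, A i j * x j

/-- Average local field `m̄(x)`. -/
def mbar {n : ℕ} (A : Matrix (Fin n) (Fin n) ℝ) (x : Fin n → ℝ) : ℝ :=
  (1 / (n : ℝ)) * ∑ i, mloc A x i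

/-- `T_n(x) = (1/n) ∑_i (m_i(x) - m̄(x))²`. -/
def Tstat {n : ℕ} (A : Matrix (Fin n) (Fin n) ℝ) (x : Fin n → ℝ) : ℝ :=
  (1 / (n : ℝ)) * ∑ i, (mloc A x i - mbar A x) ^ 2

/-- Unnormalized Ising weight `exp((β/2) xᵀAx + B ∑ x_i)`. -/
def isingWt {n : ℕ} (A : Matrix (Fin n) (Fin n) ℝ) (β B : ℝ) (x : Fin n → ℝ) : ℝ :=
  Real.exp (β / 2 * ∑ i, ∑ j, A i j * x i * x j + B * ∑ i, x i)

/-- Probability of the event `E` under the Ising measure `P_{n,β,B}`. -/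
def isingProb {n : ℕ} (A : Matrix (Fin n) (Fin n) ℝ) (β B : ℝ) (E : Set (Fin n → ℝ)) : ℝ :=
  (∑ σ : Fin n → Bool, E.indicator (isingWt A β B) (spinVec n σ)) /
    (∑ σ : Fin n → Bool, isingWt A β B (spinVec n σ))

/-- Expectation of `f` under the Ising measure `P_{n,β,B}`. -/
def isingExp {n : ℕ} (A : Matrix (Fin n) (Fin n) ℝ) (β B : ℝ) (f : (Fin n → ℝ) → ℝ) : ℝ :=
  (∑ σ : Fin n → Bool, f (spinVec n σ) * isingWt A β B (spinVec n σ)) /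
    (∑ σ : Fin n → Bool, isingWt A β B (spinVec n σ))

/-- Pseudo-likelihood equation `Q_n(β,B|x)`. -/
def Qfun {n : ℕ} (A : Matrix (Fin n) (Fin n) ℝ) (β B : ℝ) (x : Fin n → ℝ) : ℝ :=
  ∑ i, mloc A x i * (x i - Real.tanh (β * mloc A x i + B))

/-- Pseudo-likelihood equation `R_n(β,B|x)`. -/
def Rfun {n : ℕ} (A : Matrix (Fin n) (Fin n) ℝ) (β B : ℝ) (x : Fin n → ℝ) : ℝ :=
  ∑ i, (x i - Real.tanh (β * mloc A x i + B))

/-- `b_i(x) = tanh(β m_i(x) + B)`. -/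
def bvec {n : ℕ} (A : Matrix (Fin n) (Fin n) ℝ) (β B : ℝ) (x : Fin n → ℝ) : Fin n → ℝ :=
  fun i => Real.tanh (β * mloc A x i + B)

/-- `f_n(y) = (β/2) yᵀAy + B ∑ y_i`. -/
def fN {n : ℕ} (A : Matrix (Fin n) (Fin n) ℝ) (β B : ℝ) (y : Fin n → ℝ) : ℝ :=
  β / 2 * ∑ i, ∑ j, A i j * y i * y j + B * ∑ i, y i

/-- Entropy term `I(y)` (with `0 log 0 = 0`, as `Real.log 0 = 0`). -/
def entI {n : ℕ} (y : Fin n → ℝ) : ℝ :=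
  ∑ i, ((1 + y i) / 2 * Real.log ((1 + y i) / 2) + (1 - y i) / 2 * Real.log ((1 - y i) / 2))


/-!
Write `R_n(β, B | x) = ∑ᵢ εᵢ(x)` with `εᵢ(x) = xᵢ - tanh(β mᵢ(x) + B)`. The map `B ↦ R_n(β, B | x)`
is strictly decreasing, and as long as the local fields are bounded, which (BD) guarantees, its
slope is of order `n`. So the unique root is within `O(|R_n(β, B₀ | X)| / n)` of `B₀`, and it
suffices to show `R_n(β, B₀ | X) = O_p(√n)`, which by Chebyshev follows from
`E[R_n(β, B₀ | X)²] = O(n)`.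
For the second moment: flipping the spin `xᵢ` multiplies the Gibbs weight by
`exp(-2 xᵢ (β mᵢ(x) + B₀))`, which exactly reverses the sign of `εᵢ · weight`. Hence `εᵢ` is
orthogonal to every function not depending on `xᵢ`, and `E[εᵢ εⱼ] = O(Aᵢⱼ)` for `i ≠ j`.
-/

open Real

namespace Real

theorem hasDerivAt_tanh (x : ℝ) : HasDerivAt tanh (1 / cosh x ^ 2) x := by
  have h := (hasDerivAt_sinh x).div (hasDerivAt_cosh x) (cosh_pos x).ne'
  rw [show sinh / cosh = tanh from funext fun y => (tanh_eq_sinh_div_cosh y).symm] at h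
  refine h.congr_deriv ?_
  rw [← cosh_sq_sub_sinh_sq x]
  ring

theorem deriv_tanh (x : ℝ) : deriv tanh x = 1 / cosh x ^ 2 := (hasDerivAt_tanh x).deriv

theorem differentiable_tanh : Differentiable ℝ tanh := fun x =>
  (hasDerivAt_tanh x).differentiableAt

theorem continuous_tanh : Continuous tanh := differentiable_tanh.continuous

theorem strictMono_tanh : StrictMono tanh :=
  strictMono_of_deriv_pos fun x => by rw [deriv_tanh]; positivity

theorem lipschitzWith_tanh : LipschitzWith 1 tanh :=
  lipschitzWith_of_nnnorm_deriv_le differentiable_tanh fun x => by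
    rw [← NNReal.coe_le_coe, coe_nnnorm, deriv_tanh, norm_div, norm_one, norm_pow,
      norm_of_nonneg (cosh_pos x).le]
    exact div_le_one_of_le₀ (one_le_pow₀ (one_le_cosh x)) (by positivity)

theorem abs_tanh_sub_tanh_le (a b : ℝ) : |tanh a - tanh b| ≤ |a - b| := by
  simpa [Real.dist_eq] using lipschitzWith_tanh.dist_le_mul a b

theorem div_cosh_sq_le_tanh_add_sub_tanh {h L t : ℝ} (hh : |h| ≤ L) (ht : 0 ≤ t) :
    t / cosh (L + t) ^ 2 ≤ tanh (h + t) - tanh h := by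
  have hslope := (convex_Icc h (h + t)).mul_sub_le_image_sub_of_le_deriv
    continuous_tanh.continuousOn differentiable_tanh.differentiableOn (C := 1 / cosh (L + t) ^ 2)
    (fun x hx => by
      rw [interior_Icc] at hx
      rw [deriv_tanh]
      gcongr
      rw [cosh_le_cosh, abs_of_nonneg (by linarith [abs_nonneg h] : 0 ≤ L + t)]
      rw [abs_le] at hh ⊢
      constructor <;> linarith [hx.1, hx.2])
    h ⟨le_rfl, by linarith⟩ (h + t) ⟨by linarith, le_rfl⟩ (by linarith)
  simpa [div_eq_mul_inv, mul_comm] using hslope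

theorem one_add_tanh_mul_exp (x : ℝ) : (1 + tanh x) * exp (-(2 * x)) = 1 - tanh x := by
  rw [tanh_eq_sinh_div_cosh, sinh_eq, cosh_eq,
    show exp (-(2 * x)) = exp (-x) * exp (-x) by rw [← exp_add]; ring_nf]
  field_simp
  rw [exp_neg]
  field_simp
  ring

end Real

variable {n : ℕ}

section Update

theorem update_eq_add_ite {ι G : Type*} [DecidableEq ι] [AddCommGroup G] (x : ι → G) (i : ι)
    (c : G) :
    Function.update x i c = fun j => x j + if j = i then c - x i else 0 := by
  ext j
  rcases eq_or_ne j i with rfl | h <;> simp [*]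

theorem mloc_update (A : Matrix (Fin n) (Fin n) ℝ) (x : Fin n → ℝ) (i j : Fin n) (c : ℝ) :
    mloc A (Function.update x i c) j = mloc A x j + A j i * (c - x i) := by
  simp [mloc, update_eq_add_ite, mul_add, Finset.sum_add_distrib]

theorem quadForm_update (A : Matrix (Fin n) (Fin n) ℝ) (hs : A.IsSymm) (x : Fin n → ℝ)
    (i : Fin n) (c : ℝ) :
    ∑ j, ∑ k, A j k * Function.update x i c j * Function.update x i c k =
      ∑ j, ∑ k, A j k * x j * x k + 2 * (c - x i) * mloc A x i + A i i * (c - x i) ^ 2 := by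
  have hrow : ∑ k, A i k * (c - x i) * x k = (c - x i) * mloc A x i := by
    rw [mloc, Finset.mul_sum]
    exact Finset.sum_congr rfl fun k _ => by ring
  have hcol : ∑ k, A k i * x k * (c - x i) = (c - x i) * mloc A x i := by
    rw [mloc, Finset.mul_sum]
    exact Finset.sum_congr rfl fun k _ => by rw [hs.apply]; ring
  simp only [update_eq_add_ite, mul_add, mul_ite, mul_zero, add_mul, ite_mul, zero_mul,
    Finset.sum_add_distrib, Finset.sum_ite_irrel, Finset.sum_const_zero, Finset.sum_ite_eq',
    Finset.mem_univ, ↓reduceIte, hrow, hcol]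
  ring

theorem sum_update {ι G : Type*} [Fintype ι] [DecidableEq ι] [AddCommGroup G] (x : ι → G)
    (i : ι) (c : G) :
    ∑ j, Function.update x i c j = ∑ j, x j + (c - x i) := by
  simp [update_eq_add_ite, Finset.sum_add_distrib]

theorem isingWt_update_neg (A : Matrix (Fin n) (Fin n) ℝ) (hs : A.IsSymm)
    (hd : ∀ i, A i i = 0) (β B : ℝ) (x : Fin n → ℝ) (i : Fin n) :
    isingWt A β B (Function.update x i (-x i)) =
      isingWt A β B x * exp (-(2 * x i * (β * mloc A x i + B))) := by
  rw [isingWt, isingWt, ← exp_add, quadForm_update A hs, sum_update, hd]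
  ring_nf

end Update

section Spins

def flipAt (i : Fin n) (σ : Fin n → Bool) : Fin n → Bool := Function.update σ i (!σ i)

theorem flipAt_involutive (i : Fin n) : Function.Involutive (flipAt i) := fun σ => by
  ext j
  rcases eq_or_ne j i with rfl | h <;> simp [flipAt, *]

theorem spinVec_flipAt (i : Fin n) (σ : Fin n → Bool) :
    spinVec n (flipAt i σ) = Function.update (spinVec n σ) i (-spinVec n σ i) := by
  ext j
  rcases eq_or_ne j i with rfl | h
  · cases h : σ j <;> simp [flipAt, spinVec, h]
  · simp [flipAt, spinVec, h]

theorem spinVec_eq_one_or_eq_neg_one (σ : Fin n → Bool) (i : Fin n) :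
    spinVec n σ i = 1 ∨ spinVec n σ i = -1 := by
  cases h : σ i <;> simp [spinVec, h]

theorem abs_spinVec (σ : Fin n → Bool) (i : Fin n) : |spinVec n σ i| = 1 := by
  rcases spinVec_eq_one_or_eq_neg_one σ i with h | h <;> simp [h]

theorem abs_mloc_spinVec_le (A : Matrix (Fin n) (Fin n) ℝ) (σ : Fin n → Bool) (i : Fin n) :
    |mloc A (spinVec n σ) i| ≤ ∑ j, |A i j| :=
  (Finset.abs_sum_le_sum_abs _ _).trans_eq <| by simp [abs_mul, abs_spinVec]

end Spins

section Gibbs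

variable (A : Matrix (Fin n) (Fin n) ℝ) (β B : ℝ)

theorem isingWt_pos (x : Fin n → ℝ) : 0 < isingWt A β B x := exp_pos _

theorem sum_isingWt_pos : 0 < ∑ σ : Fin n → Bool, isingWt A β B (spinVec n σ) :=
  Finset.sum_pos (fun _ _ => isingWt_pos A β B _) Finset.univ_nonempty

theorem isingExp_add (f g : (Fin n → ℝ) → ℝ) :
    isingExp A β B (fun x => f x + g x) = isingExp A β B f + isingExp A β B g := by
  simp only [isingExp, add_mul, Finset.sum_add_distrib, add_div]

theorem isingExp_sum {ι : Type*} (s : Finset ι) (f : ι → (Fin n → ℝ) → ℝ) :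
    isingExp A β B (fun x => ∑ i ∈ s, f i x) = ∑ i ∈ s, isingExp A β B (f i) := by
  simp only [isingExp, Finset.sum_mul, ← Finset.sum_div]
  rw [Finset.sum_comm]

theorem isingExp_const (c : ℝ) : isingExp A β B (fun _ => c) = c := by
  rw [isingExp, ← Finset.mul_sum, mul_div_cancel_right₀ _ (sum_isingWt_pos A β B).ne']

theorem isingExp_mono {f g : (Fin n → ℝ) → ℝ} (h : ∀ σ, f (spinVec n σ) ≤ g (spinVec n σ)) :
    isingExp A β B f ≤ isingExp A β B g := by
  refine div_le_div_of_nonneg_right (Finset.sum_le_sum fun σ _ => ?_)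
    (sum_isingWt_pos A β B).le
  exact mul_le_mul_of_nonneg_right (h σ) (isingWt_pos A β B _).le

theorem isingProb_nonneg (E : Set (Fin n → ℝ)) : 0 ≤ isingProb A β B E :=
  div_nonneg (Finset.sum_nonneg fun _ _ =>
    Set.indicator_nonneg (fun x _ => (isingWt_pos A β B x).le) _) (sum_isingWt_pos A β B).le

theorem isingProb_mono {E F : Set (Fin n → ℝ)}
    (h : ∀ σ, spinVec n σ ∈ E → spinVec n σ ∈ F) :
    isingProb A β B E ≤ isingProb A β B F := by
  refine div_le_div_of_nonneg_right (Finset.sum_le_sum fun σ _ => ?_)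
    (sum_isingWt_pos A β B).le
  by_cases hσ : spinVec n σ ∈ E
  · rw [Set.indicator_of_mem hσ, Set.indicator_of_mem (h σ hσ)]
  · rw [Set.indicator_of_notMem hσ]
    exact Set.indicator_nonneg (fun x _ => (isingWt_pos A β B x).le) _

theorem isingProb_add_isingProb_compl (E : Set (Fin n → ℝ)) :
    isingProb A β B E + isingProb A β B Eᶜ = 1 := by
  rw [isingProb, isingProb, ← add_div, ← Finset.sum_add_distrib]
  simp only [Set.indicator_self_add_compl_apply]
  exact div_self (sum_isingWt_pos A β B).ne'

theorem isingProb_le_one (E : Set (Fin n → ℝ)) : isingProb A β B E ≤ 1 := by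
  linarith [isingProb_add_isingProb_compl A β B E, isingProb_nonneg A β B Eᶜ]

theorem isingProb_le_isingExp_div {E : Set (Fin n → ℝ)} {f : (Fin n → ℝ) → ℝ} {c : ℝ}
    (hc : 0 < c) (hf : ∀ σ, 0 ≤ f (spinVec n σ))
    (hE : ∀ σ, spinVec n σ ∈ E → c ≤ f (spinVec n σ)) :
    isingProb A β B E ≤ isingExp A β B f / c := by
  rw [le_div_iff₀ hc, mul_comm, isingProb, isingExp, mul_div_assoc', Finset.mul_sum]
  refine div_le_div_of_nonneg_right (Finset.sum_le_sum fun σ _ => ?_)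
    (sum_isingWt_pos A β B).le
  have hw := (isingWt_pos A β B (spinVec n σ)).le
  by_cases hσ : spinVec n σ ∈ E
  · rw [Set.indicator_of_mem hσ]
    exact mul_le_mul_of_nonneg_right (hE σ hσ) hw
  · rw [Set.indicator_of_notMem hσ, mul_zero]
    exact mul_nonneg (hf σ) hw

end Gibbs

section Residual

variable (A : Matrix (Fin n) (Fin n) ℝ) (β B : ℝ)

def spinResidual (x : Fin n → ℝ) (i : Fin n) : ℝ := x i - tanh (β * mloc A x i + B)

theorem abs_spinResidual_spinVec_le (σ : Fin n → Bool) (i : Fin n) :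
    |spinResidual A β B (spinVec n σ) i| ≤ 2 :=
  (abs_sub _ _).trans <| by
    linarith [abs_spinVec σ i, abs_tanh_lt_one (β * mloc A (spinVec n σ) i + B)]

theorem spinResidual_flipAt_mul_isingWt (hs : A.IsSymm) (hd : ∀ i, A i i = 0)
    (σ : Fin n → Bool) (i : Fin n) :
    spinResidual A β B (spinVec n (flipAt i σ)) i * isingWt A β B (spinVec n (flipAt i σ)) =
      -(spinResidual A β B (spinVec n σ) i * isingWt A β B (spinVec n σ)) := by
  set x := spinVec n σ
  have hfield : mloc A (Function.update x i (-x i)) i = mloc A x i := by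
    rw [mloc_update, hd]; ring
  rw [spinResidual, spinResidual, spinVec_flipAt, isingWt_update_neg A hs hd, hfield,
    Function.update_self]
  have key : (x i + tanh (β * mloc A x i + B)) * exp (-(2 * x i * (β * mloc A x i + B))) =
      x i - tanh (β * mloc A x i + B) := by
    have hx : x i = 1 ∨ x i = -1 := spinVec_eq_one_or_eq_neg_one σ i
    rcases hx with h | h <;> rw [h]
    · simpa using one_add_tanh_mul_exp (β * mloc A x i + B)
    · have := one_add_tanh_mul_exp (-(β * mloc A x i + B))
      rw [tanh_neg] at this
      ring_nf at this ⊢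
      linarith
  linear_combination (-isingWt A β B x) * key

theorem isingExp_spinResidual_mul_eq_zero (hs : A.IsSymm) (hd : ∀ i, A i i = 0) (i : Fin n)
    (g : (Fin n → ℝ) → ℝ) (hg : ∀ σ, g (spinVec n (flipAt i σ)) = g (spinVec n σ)) :
    isingExp A β B (fun x => spinResidual A β B x i * g x) = 0 := by
  set F : (Fin n → Bool) → ℝ := fun σ =>
    spinResidual A β B (spinVec n σ) i * g (spinVec n σ) * isingWt A β B (spinVec n σ)
  have hF : ∑ σ, F (flipAt i σ) = ∑ σ, -F σ := Finset.sum_congr rfl fun σ _ => by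
    simp only [F, hg σ]
    linear_combination g (spinVec n σ) * spinResidual_flipAt_mul_isingWt A β B hs hd σ i
  rw [(flipAt_involutive i).bijective.sum_comp F, Finset.sum_neg_distrib] at hF
  rw [isingExp, show ∑ σ, F σ = 0 by linarith, zero_div]

theorem isingExp_spinResidual_mul_spinResidual_le (hs : A.IsSymm) (hd : ∀ i, A i i = 0)
    {i j : Fin n} (hij : i ≠ j) :
    isingExp A β B (fun x => spinResidual A β B x i * spinResidual A β B x j) ≤
      2 * |β| * |A j i| := by
  -- `g` does not see `xᵢ`, and it differs from `εⱼ` by at most `|β Aⱼᵢ|`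
  set g : (Fin n → ℝ) → ℝ := fun x => x j - tanh (β * (mloc A x j - A j i * x i) + B)
  have hg : ∀ σ, g (spinVec n (flipAt i σ)) = g (spinVec n σ) := fun σ => by
    simp only [g, spinVec_flipAt, mloc_update, Function.update_self,
      Function.update_of_ne hij.symm]
    ring_nf
  have hsplit := isingExp_add A β B (fun x => spinResidual A β B x i * g x)
    (fun x => spinResidual A β B x i * (spinResidual A β B x j - g x))
  simp only [← mul_add, add_sub_cancel, isingExp_spinResidual_mul_eq_zero A β B hs hd i g hg,
    zero_add] at hsplit
  rw [hsplit, ← isingExp_const A β B (2 * |β| * |A j i|)]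
  refine isingExp_mono A β B fun σ => (le_abs_self _).trans ?_
  have hdiff : |spinResidual A β B (spinVec n σ) j - g (spinVec n σ)| ≤ |β| * |A j i| := by
    simp only [spinResidual, g, sub_sub_sub_cancel_left]
    refine (abs_tanh_sub_tanh_le _ _).trans_eq ?_
    rw [show β * (mloc A (spinVec n σ) j - A j i * spinVec n σ i) + B -
        (β * mloc A (spinVec n σ) j + B) = -(β * A j i * spinVec n σ i) by ring]
    simp [abs_mul, abs_spinVec]
  rw [abs_mul, mul_assoc]
  exact mul_le_mul (abs_spinResidual_spinVec_le A β B σ i) hdiff (abs_nonneg _) zero_le_two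

theorem isingExp_Rfun_sq_le (hs : A.IsSymm) (hd : ∀ i, A i i = 0) :
    isingExp A β B (fun x => Rfun A β B x ^ 2) ≤ 4 * n + 2 * |β| * ∑ i, ∑ j, |A i j| := by
  have hexpand : (fun x => Rfun A β B x ^ 2) =
      fun x => ∑ i, ∑ j, spinResidual A β B x i * spinResidual A β B x j := by
    ext x
    rw [sq, Rfun, Finset.sum_mul_sum]
    rfl
  have hentry : ∀ i j, isingExp A β B (fun x => spinResidual A β B x i * spinResidual A β B x j)
      ≤ (if i = j then 4 else 0) + 2 * |β| * |A j i| := fun i j => by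
    rcases eq_or_ne i j with rfl | hij
    · rw [if_pos rfl, ← isingExp_const A β B 4]
      refine (isingExp_mono A β B fun σ => ?_).trans (le_add_of_nonneg_right (by positivity))
      obtain ⟨h1, h2⟩ := abs_le.1 (abs_spinResidual_spinVec_le A β B σ i)
      nlinarith
    · rw [if_neg hij, zero_add]
      exact isingExp_spinResidual_mul_spinResidual_le A β B hs hd hij
  simp only [hexpand, isingExp_sum]
  calc ∑ i, ∑ j, isingExp A β B (fun x => spinResidual A β B x i * spinResidual A β B x j)
      ≤ ∑ i : Fin n, ∑ j, ((if i = j then 4 else 0) + 2 * |β| * |A j i|) :=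
        Finset.sum_le_sum fun i _ => Finset.sum_le_sum fun j _ => hentry i j
    _ = 4 * n + 2 * |β| * ∑ i, ∑ j, |A i j| := by
        rw [Finset.sum_comm (f := fun i j => |A i j|)]
        simp only [Finset.sum_add_distrib, Finset.sum_ite_eq, Finset.mem_univ, if_true,
          ← Finset.mul_sum, Finset.sum_const, Finset.card_univ, Fintype.card_fin, nsmul_eq_mul]
        ring

end Residual

section Root

variable (A : Matrix (Fin n) (Fin n) ℝ) (β : ℝ)

theorem Rfun_sub_Rfun (x : Fin n → ℝ) (B B' : ℝ) : Rfun A β B x - Rfun A β B' x =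
    ∑ i, (tanh (β * mloc A x i + B') - tanh (β * mloc A x i + B)) := by
  rw [Rfun, Rfun, ← Finset.sum_sub_distrib]
  exact Finset.sum_congr rfl fun i _ => by ring

theorem continuous_Rfun (x : Fin n → ℝ) : Continuous fun b => Rfun A β b x :=
  continuous_finsetSum _ fun _ _ =>
    continuous_const.sub (continuous_tanh.comp (continuous_const.add continuous_id))

theorem strictAnti_Rfun (x : Fin n → ℝ) (hn : 0 < n) : StrictAnti fun b => Rfun A β b x := fun b b' hb =>
  Finset.sum_lt_sum_of_nonempty ⟨⟨0, hn⟩, Finset.mem_univ _⟩ fun i _ => by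
    linarith [strictMono_tanh (show β * mloc A x i + b < β * mloc A x i + b' by linarith)]

variable {β} {x : Fin n → ℝ} {B L t : ℝ} (hL : ∀ i, |β * mloc A x i + B| ≤ L) (ht : 0 ≤ t)
include hL ht

theorem Rfun_add_le : Rfun A β (B + t) x ≤ Rfun A β B x - n * (t / cosh (L + t) ^ 2) := by
  have h := Finset.sum_le_sum fun i (_ : i ∈ Finset.univ) =>
    div_cosh_sq_le_tanh_add_sub_tanh (hL i) ht
  simp only [Finset.sum_const, Finset.card_univ, Fintype.card_fin, nsmul_eq_mul, add_assoc] at h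
  linarith [Rfun_sub_Rfun A β x B (B + t)]

theorem le_Rfun_sub : Rfun A β B x + n * (t / cosh (L + t) ^ 2) ≤ Rfun A β (B - t) x := by
  have h := Finset.sum_le_sum fun i (_ : i ∈ Finset.univ) =>
    div_cosh_sq_le_tanh_add_sub_tanh ((abs_neg (β * mloc A x i + B)).le.trans (hL i)) ht
  simp only [Finset.sum_const, Finset.card_univ, Fintype.card_fin, nsmul_eq_mul] at h
  have hodd : ∀ i, tanh (-(β * mloc A x i + B) + t) - tanh (-(β * mloc A x i + B)) =
      tanh (β * mloc A x i + B) - tanh (β * mloc A x i + (B - t)) := fun i => by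
    rw [show -(β * mloc A x i + B) + t = -(β * mloc A x i + (B - t)) by ring, tanh_neg,
      tanh_neg]
    ring
  simp only [hodd] at h
  linarith [Rfun_sub_Rfun A β x (B - t) B]

theorem exists_Rfun_eq_zero_mem_Icc (hR : |Rfun A β B x| ≤ n * (t / cosh (L + t) ^ 2)) :
    ∃ b ∈ Set.Icc (B - t) (B + t), Rfun A β b x = 0 := by
  rw [abs_le] at hR
  exact intermediate_value_Icc' (by linarith) (continuous_Rfun A β x).continuousOn
    ⟨by linarith [Rfun_add_le A hL ht], by linarith [le_Rfun_sub A hL ht]⟩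

end Root

theorem exists_unique_Rfun_eq_zero_near (A : Matrix (Fin n) (Fin n) ℝ) {β B L K : ℝ}
    {x : Fin n → ℝ} (hn : 0 < n) (hL : ∀ i, |β * mloc A x i + B| ≤ L) (hK : 0 ≤ K)
    (hKn : K * cosh (L + 1) ^ 2 ≤ √n) (hR : |Rfun A β B x| ≤ K * √n) :
    ∃ b, Rfun A β b x = 0 ∧ (∀ b', Rfun A β b' x = 0 → b' = b) ∧
      √n * |b - B| ≤ K * cosh (L + 1) ^ 2 := by
  set M := K * cosh (L + 1) ^ 2
  have hsqrt : 0 < √(n : ℝ) := Real.sqrt_pos.2 (Nat.cast_pos.2 hn)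
  have hL0 : 0 ≤ L := (abs_nonneg _).trans (hL ⟨0, hn⟩)
  have ht0 : 0 ≤ M / √n := by positivity
  have ht1 : M / √n ≤ 1 := div_le_one_of_le₀ hKn hsqrt.le
  have hR' : |Rfun A β B x| ≤ n * (M / √n / cosh (L + M / √n) ^ 2) := by
    have hcosh : cosh (L + M / √n) ^ 2 ≤ cosh (L + 1) ^ 2 := by
      gcongr
      rw [cosh_le_cosh, abs_of_nonneg (by positivity), abs_of_nonneg (by positivity)]
      linarith
    calc |Rfun A β B x| ≤ K * √n := hR
      _ = n * (M / √n / cosh (L + 1) ^ 2) := by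
        field_simp
        rw [Real.sq_sqrt (Nat.cast_nonneg n)]
        ring
      _ ≤ n * (M / √n / cosh (L + M / √n) ^ 2) := by gcongr
  obtain ⟨b, hb, hb0⟩ := exists_Rfun_eq_zero_mem_Icc A hL ht0 hR'
  refine ⟨b, hb0, fun b' hb' => (strictAnti_Rfun A β x hn).injective (hb'.trans hb0.symm), ?_⟩
  calc √n * |b - B| ≤ √n * (M / √n) := by
        gcongr
        rw [abs_le]
        constructor <;> linarith [hb.1, hb.2]
    _ = M := mul_div_cancel₀ M hsqrt.ne'

theorem isingProb_not_exists_unique_root_near_le (A : Matrix (Fin n) (Fin n) ℝ) (hs : A.IsSymm)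
    (hd : ∀ i, A i i = 0) (hnn : ∀ i j, 0 ≤ A i j) {β B γ K : ℝ} (hγ : ∀ i, ∑ j, A i j ≤ γ)
    (hn : 0 < n) (hK : 0 < K) (hKn : K * cosh (|β| * γ + |B| + 1) ^ 2 ≤ √n) :
    isingProb A β B {x | ¬ ∃ b, Rfun A β b x = 0 ∧ (∀ b', Rfun A β b' x = 0 → b' = b) ∧
      √n * |b - B| ≤ K * cosh (|β| * γ + |B| + 1) ^ 2} ≤ (4 + 2 * |β| * γ) / K ^ 2 := by
  have hfield : ∀ σ i, |β * mloc A (spinVec n σ) i + B| ≤ |β| * γ + |B| := fun σ i => by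
    have hm : |mloc A (spinVec n σ) i| ≤ γ :=
      (abs_mloc_spinVec_le A σ i).trans_eq (by simp [abs_of_nonneg (hnn i _)]) |>.trans (hγ i)
    calc |β * mloc A (spinVec n σ) i + B| ≤ |β| * |mloc A (spinVec n σ) i| + |B| := by
          simpa [abs_mul] using abs_add_le (β * mloc A (spinVec n σ) i) B
      _ ≤ |β| * γ + |B| := by gcongr
  have hsumA : ∑ i, ∑ j, |A i j| ≤ n * γ := by
    simpa [abs_of_nonneg (hnn _ _)] using Finset.sum_le_sum fun i (_ : i ∈ Finset.univ) => hγ i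
  have hsecond : isingExp A β B (fun x => Rfun A β B x ^ 2) ≤ (4 + 2 * |β| * γ) * n := by
    refine (isingExp_Rfun_sq_le A β B hs hd).trans ?_
    nlinarith [mul_le_mul_of_nonneg_left hsumA (abs_nonneg β)]
  have hn' : (0 : ℝ) < n := Nat.cast_pos.2 hn
  refine (isingProb_le_isingExp_div A β B (c := K ^ 2 * n) (f := fun x => Rfun A β B x ^ 2)
    (by positivity) (fun σ => sq_nonneg _) fun σ hσ => ?_).trans ?_
  · by_contra hsmall
    refine hσ (exists_unique_Rfun_eq_zero_near A hn (hfield σ) hK.le hKn ?_)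
    rw [← Real.sqrt_sq hK.le, ← Real.sqrt_mul (sq_nonneg K)]
    exact Real.abs_le_sqrt (not_le.1 hsmall).le
  · rw [div_le_div_iff₀ (by positivity) (by positivity)]
    nlinarith [mul_le_mul_of_nonneg_right hsecond (sq_nonneg K)]

theorem exists_eventually_isingProb_not_exists_unique_root_near_le
    (A : (n : ℕ) → Matrix (Fin n) (Fin n) ℝ) (hsymm : ∀ n, (A n).IsSymm)
    (hnonneg : ∀ n, ∀ i j : Fin n, 0 ≤ A n i j) (hdiag : ∀ n, ∀ i : Fin n, A n i i = 0)
    {γ : ℝ} (hγ : ∀ n, ∀ i : Fin n, ∑ j, A n i j ≤ γ) (β B : ℝ) {ε : ℝ}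
    (hε : 0 < ε) :
    ∃ M : ℝ, ∀ᶠ n : ℕ in atTop, isingProb (A n) β B
      {x | ¬ ∃ b : ℝ, Rfun (A n) β b x = 0 ∧ (∀ b' : ℝ, Rfun (A n) β b' x = 0 → b' = b) ∧
        √n * |b - B| ≤ M} ≤ ε := by
  have hγ0 : 0 ≤ γ := (Finset.sum_nonneg fun j _ => hnonneg 1 0 j).trans (hγ 1 0)
  have hC : 0 < 4 + 2 * |β| * γ := by positivity
  set K := √((4 + 2 * |β| * γ) / ε)
  have hK : 0 < K := Real.sqrt_pos.2 (by positivity)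
  set M := K * cosh (|β| * γ + |B| + 1) ^ 2
  refine ⟨M, ?_⟩
  filter_upwards [eventually_ge_atTop 1, eventually_ge_atTop ⌈M ^ 2⌉₊] with n hn hMn
  have hM : M ≤ √n := Real.le_sqrt_of_sq_le ((Nat.le_ceil _).trans (by exact_mod_cast hMn))
  refine (isingProb_not_exists_unique_root_near_le (A n) (hsymm n) (hdiag n) (hnonneg n) (hγ n)
    hn hK hM).trans_eq ?_
  rw [Real.sq_sqrt (by positivity), div_div_cancel₀ hC.ne']

theorem stmt10_general (A : (n : ℕ) → Matrix (Fin n) (Fin n) ℝ)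
    (hsymm : ∀ n, (A n).IsSymm)
    (hnonneg : ∀ n, ∀ i j : Fin n, 0 ≤ A n i j)
    (hdiag : ∀ n, ∀ i : Fin n, A n i i = 0)
    (hBD : ∃ γ : ℝ, ∀ n, ∀ i : Fin n, (∑ j, A n i j) ≤ γ)
    (β B₀ : ℝ) :
    Tendsto (fun n : ℕ => isingProb (A n) β B₀
        {x | ∃! b : ℝ, Rfun (A n) β b x = 0}) atTop (nhds 1) ∧
    ∀ ε > (0 : ℝ), ∃ M : ℝ,
      limsup (fun n : ℕ => isingProb (A n) β B₀
        {x | ¬ ∃ b : ℝ, Rfun (A n) β b x = 0 ∧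
          (∀ b' : ℝ, Rfun (A n) β b' x = 0 → b' = b) ∧
          Real.sqrt n * |b - B₀| ≤ M})
        atTop ≤ ε := by
  obtain ⟨γ, hγ⟩ := hBD
  have hnear := fun ε (hε : 0 < ε) => exists_eventually_isingProb_not_exists_unique_root_near_le
    A hsymm hnonneg hdiag hγ β B₀ hε
  refine ⟨tendsto_order.2 ⟨fun a ha => ?_, fun a ha => Eventually.of_forall fun n =>
    (isingProb_le_one _ _ _ _).trans_lt ha⟩, fun ε hε => ?_⟩
  · obtain ⟨M, hM⟩ := hnear ((1 - a) / 2) (by linarith)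
    filter_upwards [hM] with n hn
    have hfail : isingProb (A n) β B₀ {x | ∃! b : ℝ, Rfun (A n) β b x = 0}ᶜ ≤ (1 - a) / 2 := by
      refine (isingProb_mono (A n) β B₀ ?_).trans hn
      rintro σ hσ ⟨b, hb, huniq, -⟩
      exact hσ ⟨b, hb, huniq⟩
    linarith [isingProb_add_isingProb_compl (A n) β B₀ {x | ∃! b : ℝ, Rfun (A n) β b x = 0}]
  · obtain ⟨M, hM⟩ := hnear ε hε
    exact ⟨M, limsup_le_of_le (isCoboundedUnder_le_of_le atTop fun n => isingProb_nonneg _ _ _ _)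
      hM⟩

/-- with `β` known, `R_n(β,B|X) = 0` has a unique root with probability tending
to one, and the root is `√n`-consistent for `B₀`. -/
theorem stmt10 (A : (n : ℕ) → Matrix (Fin n) (Fin n) ℝ)
    (hsymm : ∀ n, (A n).IsSymm)
    (hnonneg : ∀ n, ∀ i j : Fin n, 0 ≤ A n i j)
    (hdiag : ∀ n, ∀ i : Fin n, A n i i = 0)
    (hBD : ∃ γ : ℝ, ∀ n, ∀ i : Fin n, (∑ j, A n i j) ≤ γ)
    (hNT : 0 < liminf (fun n : ℕ => (1 / (n : ℝ)) * ∑ i, ∑ j, A n i j) atTop)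
    (β B₀ : ℝ) (hβ : 0 < β) (hB : B₀ ≠ 0) :
    Tendsto (fun n : ℕ => isingProb (A n) β B₀
        {x | ∃! b : ℝ, Rfun (A n) β b x = 0}) atTop (nhds 1) ∧
    ∀ ε > (0 : ℝ), ∃ M : ℝ,
      limsup (fun n : ℕ => isingProb (A n) β B₀
        {x | ¬ ∃ b : ℝ, Rfun (A n) β b x = 0 ∧
          (∀ b' : ℝ, Rfun (A n) β b' x = 0 → b' = b) ∧
          Real.sqrt n * |b - B₀| ≤ M})
        atTop ≤ ε :=
  stmt10_general A hsymm hnonneg hdiag hBD β B₀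
end
end

section
/- Let {A_n} be a sequence of n×n symmetric matrices with nonnegative entries and zeros on the diagonal satisfying (BD) and (NT), and let (β₀, B₀) ∈ Θ. Then there exists δ > 0 such that limsup_{n→∞} (1/n) log P_{n,β₀,B₀}( |Σ_{i=1}^n X_i m_i(X)| < nδ ) < 0. -/
/-!
Write `Q(x) = xᵀ A x = ∑ᵢ xᵢ mᵢ(x)`. Under the product measure with field `B` the spins are
independent with mean `tanh B`, so (the diagonal being zero) `Q` has mean `tanh² B · ∑ A`, and
Jensen's inequality bounds the partition function below by `W · exp (β/2 · tanh² B · ∑ A)`, `W`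
being the partition function of that product measure. The event `|Q| < nδ` has weight at most
`W · exp (β n δ / 2)`, and (NT) gives `∑ A ≥ c n`; with `δ = tanh² B · c / 2` the probability is at
most `exp (-β δ n / 2)`.

Since `log 0 = 0` and a real `limsup` of a sequence unbounded below is `0`, we also need the
probability to be at least `exp (-M n)`, i.e. the event to contain a spin configuration. One is
found by a discrete intermediate value argument: `Q` averages to zero over the cube, is
nonnegative at the all-plus configuration, and a single spin flip changes it by at most `4γ < nδ`.
-/

open Filter

noncomputable section

open Finset Real Matrix

lemma dotProduct_mulVec_self {ι : Type*} [Fintype ι] (A : Matrix ι ι ℝ) (x : ι → ℝ) :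
    x ⬝ᵥ A *ᵥ x = ∑ i, ∑ j, A i j * x i * x j := by
  simp only [dotProduct, mulVec, mul_sum]
  exact sum_congr rfl fun i _ => sum_congr rfl fun j _ => by ring

lemma sum_mul_mloc {n : ℕ} (A : Matrix (Fin n) (Fin n) ℝ) (x : Fin n → ℝ) :
    ∑ i, x i * mloc A x i = x ⬝ᵥ A *ᵥ x := rfl

lemma abs_spinVec_le {n : ℕ} (σ : Fin n → Bool) (k : Fin n) : |spinVec n σ k| ≤ 1 := by
  unfold spinVec; split_ifs <;> simp

lemma sum_exp_mul_prod_spinVec {n : ℕ} (B : ℝ) (T : Finset (Fin n)) :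
    ∑ σ : Fin n → Bool, exp (B * ∑ k, spinVec n σ k) * ∏ k ∈ T, spinVec n σ k
      = (2 * cosh B) ^ n * tanh B ^ #T := by
  set g : Fin n → Bool → ℝ := fun k b =>
    exp (B * if b then 1 else -1) * if k ∈ T then (if b then 1 else -1) else 1
  have hfactor (σ : Fin n → Bool) :
      exp (B * ∑ k, spinVec n σ k) * ∏ k ∈ T, spinVec n σ k = ∏ k, g k (σ k) := by
    rw [prod_mul_distrib, prod_ite_mem, univ_inter, mul_sum, exp_sum]; rfl
  have hcoord (k : Fin n) : ∑ b, g k b = 2 * cosh B * if k ∈ T then tanh B else 1 := by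
    rw [tanh_eq_sinh_div_cosh, cosh_eq, sinh_eq]
    by_cases hk : k ∈ T
    · simp [g, hk]
      field_simp
      ring
    · simp [g, hk]
      ring
  calc _ = ∑ σ : Fin n → Bool, ∏ k, g k (σ k) := sum_congr rfl fun σ _ => hfactor σ
    _ = ∏ k, ∑ b, g k b := (Fintype.prod_sum g).symm
    _ = _ := by
      rw [prod_congr rfl fun k _ => hcoord k, prod_mul_distrib, prod_ite_mem, univ_inter,
        prod_const, prod_const, card_fin]

lemma sum_exp_spinVec {n : ℕ} (B : ℝ) :
    ∑ σ : Fin n → Bool, exp (B * ∑ k, spinVec n σ k) = (2 * cosh B) ^ n := by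
  simpa using sum_exp_mul_prod_spinVec B ∅

lemma sum_exp_mul_spinVec_dotProduct_mulVec {n : ℕ} (B : ℝ) (A : Matrix (Fin n) (Fin n) ℝ)
    (hdiag : ∀ i, A i i = 0) :
    ∑ σ : Fin n → Bool, exp (B * ∑ k, spinVec n σ k) * (spinVec n σ ⬝ᵥ A *ᵥ spinVec n σ)
      = (2 * cosh B) ^ n * (tanh B ^ 2 * ∑ i, ∑ j, A i j) := by
  have hpair (i j : Fin n) : ∑ σ : Fin n → Bool,
      exp (B * ∑ k, spinVec n σ k) * (A i j * spinVec n σ i * spinVec n σ j)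
        = (2 * cosh B) ^ n * (tanh B ^ 2 * A i j) := by
    obtain rfl | hij := eq_or_ne i j
    · simp [hdiag]
    have := sum_exp_mul_prod_spinVec B {i, j}
    rw [card_pair hij] at this
    simp_rw [prod_pair hij] at this
    rw [← mul_assoc, ← this, sum_mul]
    exact sum_congr rfl fun σ _ => by ring
  calc _ = ∑ i, ∑ j, ∑ σ : Fin n → Bool,
        exp (B * ∑ k, spinVec n σ k) * (A i j * spinVec n σ i * spinVec n σ j) := by
        simp_rw [dotProduct_mulVec_self, mul_sum]
        rw [sum_comm]
        exact sum_congr rfl fun i _ => sum_comm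
    _ = _ := by simp_rw [hpair, ← mul_sum]

lemma exists_mem_Icc_of_update_sub_le {ι α : Type*} [DecidableEq ι] [Fintype ι]
    (F : (ι → α) → ℝ) {c : ℝ} (hc : 0 ≤ c)
    (hstep : ∀ σ i b, F (Function.update σ i b) - F σ ≤ c)
    {σ₀ σ₁ : ι → α} (h₀ : F σ₀ ≤ 0) (h₁ : 0 ≤ F σ₁) : ∃ σ, F σ ∈ Set.Icc 0 c := by
  suffices ∀ D : Finset ι, ∀ σ, (∀ i ∉ D, σ i = σ₁ i) → F σ ≤ 0 → ∃ σ, F σ ∈ Set.Icc 0 c from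
    this univ σ₀ (by simp) h₀
  intro D
  induction D using Finset.induction_on with
  | empty =>
    intro σ hσ hF
    obtain rfl : σ = σ₁ := funext fun i => hσ i (notMem_empty i)
    exact ⟨σ, h₁, hF.trans hc⟩
  | insert i D hi ih =>
    intro σ hσ hF
    set σ' := Function.update σ i (σ₁ i)
    by_cases hF' : F σ' ≤ 0
    · refine ih σ' (fun k hk => ?_) hF'
      obtain rfl | hki := eq_or_ne k i
      · exact Function.update_self ..
      · exact (Function.update_of_ne hki _ _).trans (hσ k (by simp [hki, hk]))
    · exact ⟨σ', le_of_not_ge hF', by linarith [hstep σ i (σ₁ i)]⟩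

lemma abs_dotProduct_mulVec_sub_le_of_eqOn {ι : Type*} [Fintype ι] [DecidableEq ι]
    {A : Matrix ι ι ℝ} (hA : ∀ a b, 0 ≤ A a b) {x y : ι → ℝ} (hx : ∀ k, |x k| ≤ 1)
    (hy : ∀ k, |y k| ≤ 1) {i : ι} (hxy : ∀ k, k ≠ i → x k = y k) :
    |y ⬝ᵥ A *ᵥ y - x ⬝ᵥ A *ᵥ x| ≤ 2 * (∑ b, A i b + ∑ a, A a i) := by
  have hterm (a b : ι) :
      |y a * y b - x a * x b| ≤ 2 * ((if a = i then 1 else 0) + (if b = i then 1 else 0)) := by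
    by_cases hab : a = i ∨ b = i
    · have h1 : |y a * y b| ≤ 1 := by rw [abs_mul]; exact mul_le_one₀ (hy a) (abs_nonneg _) (hy b)
      have h2 : |x a * x b| ≤ 1 := by rw [abs_mul]; exact mul_le_one₀ (hx a) (abs_nonneg _) (hx b)
      have h3 := abs_sub (y a * y b) (x a * x b)
      have h4 : (1 : ℝ) ≤ (if a = i then 1 else 0) + (if b = i then 1 else 0) := by
        rcases hab with h | h <;> simp only [h, if_true] <;> split_ifs <;> norm_num
      linarith
    · push Not at hab
      simp [hxy a hab.1, hxy b hab.2, hab.1, hab.2]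
  calc |y ⬝ᵥ A *ᵥ y - x ⬝ᵥ A *ᵥ x|
      = |∑ a, ∑ b, A a b * (y a * y b - x a * x b)| := by
        simp only [dotProduct_mulVec_self, ← sum_sub_distrib]
        congr 1; exact sum_congr rfl fun a _ => sum_congr rfl fun b _ => by ring
    _ ≤ ∑ a, ∑ b, A a b * (2 * ((if a = i then 1 else 0) + (if b = i then 1 else 0))) := by
        refine (abs_sum_le_sum_abs _ _).trans (sum_le_sum fun a _ => ?_)
        refine (abs_sum_le_sum_abs _ _).trans (sum_le_sum fun b _ => ?_)
        rw [abs_mul, abs_of_nonneg (hA a b)]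
        exact mul_le_mul_of_nonneg_left (hterm a b) (hA a b)
    _ = 2 * (∑ b, A i b + ∑ a, A a i) := by
        simp only [mul_add, mul_ite, mul_one, mul_zero, sum_add_distrib, sum_ite_eq', mem_univ,
          if_true]
        rw [sum_comm (f := fun a b => if a = i then A a b * 2 else 0)]
        simp only [sum_ite_eq', mem_univ, if_true, ← sum_mul]
        ring

lemma exists_abs_spinVec_dotProduct_mulVec_le {n : ℕ} {A : Matrix (Fin n) (Fin n) ℝ}
    (hA : ∀ i j, 0 ≤ A i j) (hsymm : A.IsSymm) (hdiag : ∀ i, A i i = 0) {γ : ℝ} (hγ : 0 ≤ γ)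
    (hrow : ∀ i, ∑ j, A i j ≤ γ) :
    ∃ σ : Fin n → Bool, |spinVec n σ ⬝ᵥ A *ᵥ spinVec n σ| ≤ 4 * γ := by
  set F : (Fin n → Bool) → ℝ := fun σ => spinVec n σ ⬝ᵥ A *ᵥ spinVec n σ
  -- Without external field the spins are uncorrelated, so `F` averages to zero.
  obtain ⟨σ₀, -, hσ₀⟩ : ∃ σ₀ ∈ univ, F σ₀ ≤ 0 := by
    refine exists_le_of_sum_le univ_nonempty (le_of_eq ?_)
    simpa using sum_exp_mul_spinVec_dotProduct_mulVec 0 A hdiag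
  have hσ₁ : 0 ≤ F fun _ => true := by
    simp only [F, dotProduct_mulVec_self, spinVec, if_true, mul_one]
    exact sum_nonneg fun i _ => sum_nonneg fun j _ => hA i j
  have hstep (σ : Fin n → Bool) (i : Fin n) (b : Bool) :
      F (Function.update σ i b) - F σ ≤ 4 * γ := by
    refine le_of_abs_le ((abs_dotProduct_mulVec_sub_le_of_eqOn hA (abs_spinVec_le σ)
      (abs_spinVec_le _) (i := i) fun k hk => ?_).trans ?_)
    · simp [spinVec, Function.update_of_ne hk]
    · have hcol : ∑ a, A a i ≤ γ := by simpa only [hsymm.apply] using hrow i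
      linarith [hrow i]
  obtain ⟨σ, hσ⟩ := exists_mem_Icc_of_update_sub_le F (by positivity) hstep hσ₀ hσ₁
  exact ⟨σ, abs_le.mpr ⟨by linarith [hσ.1], hσ.2⟩⟩

lemma one_div_mul_log_mem_Icc {t P a b : ℝ} (ht : 0 < t) (hlo : exp (-(a * t)) ≤ P)
    (hhi : P ≤ exp (-(b * t))) : 1 / t * log P ∈ Set.Icc (-a) (-b) := by
  have hP := (exp_pos _).trans_le hlo
  have h₁ := (le_log_iff_exp_le hP).mpr hlo
  have h₂ := (log_le_iff_le_exp hP).mpr hhi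
  rw [one_div, inv_mul_eq_div]
  exact ⟨(le_div_iff₀ ht).mpr (by linarith), (div_le_iff₀ ht).mpr (by linarith)⟩

section IsingBounds

variable {n : ℕ} {A : Matrix (Fin n) (Fin n) ℝ} {β B : ℝ}

lemma isingWt_eq_exp_mul_exp (x : Fin n → ℝ) :
    isingWt A β B x = exp (B * ∑ k, x k) * exp (β / 2 * (x ⬝ᵥ A *ᵥ x)) := by
  rw [isingWt, dotProduct_mulVec_self, ← exp_add, add_comm]

lemma pow_mul_exp_le_sum_isingWt (hdiag : ∀ i, A i i = 0) :
    (2 * cosh B) ^ n * exp (β / 2 * (tanh B ^ 2 * ∑ i, ∑ j, A i j))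
      ≤ ∑ σ : Fin n → Bool, isingWt A β B (spinVec n σ) := by
  set W := (2 * cosh B) ^ n
  set w : (Fin n → Bool) → ℝ := fun σ => exp (B * ∑ k, spinVec n σ k) / W
  set q : (Fin n → Bool) → ℝ := fun σ => β / 2 * (spinVec n σ ⬝ᵥ A *ᵥ spinVec n σ)
  have hW : 0 < W := pow_pos (mul_pos two_pos (cosh_pos B)) n
  have hw : ∑ σ, w σ = 1 := by rw [← sum_div, sum_exp_spinVec, div_self hW.ne']
  have hmean : ∑ σ, w σ • q σ = β / 2 * (tanh B ^ 2 * ∑ i, ∑ j, A i j) := by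
    calc ∑ σ, w σ • q σ = β / 2 * (∑ σ : Fin n → Bool,
          exp (B * ∑ k, spinVec n σ k) * (spinVec n σ ⬝ᵥ A *ᵥ spinVec n σ)) / W := by
          rw [mul_sum, sum_div]
          exact sum_congr rfl fun σ _ => by simp only [w, q, smul_eq_mul]; ring
      _ = _ := by
          rw [sum_exp_mul_spinVec_dotProduct_mulVec B A hdiag]
          simp only [W]
          field_simp
  have hjensen := convexOn_exp.map_sum_le (t := univ) (fun σ _ => by positivity) hw
    (fun σ _ => Set.mem_univ (q σ))
  rw [hmean] at hjensen
  calc W * exp (β / 2 * (tanh B ^ 2 * ∑ i, ∑ j, A i j))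
      ≤ W * ∑ σ, w σ • exp (q σ) := mul_le_mul_of_nonneg_left hjensen hW.le
    _ = ∑ σ : Fin n → Bool, isingWt A β B (spinVec n σ) := by
      rw [mul_sum]
      refine sum_congr rfl fun σ _ => ?_
      simp only [isingWt_eq_exp_mul_exp, smul_eq_mul, w, q]
      field_simp

lemma sum_indicator_isingWt_le (hβ : 0 ≤ β) {E : Set (Fin n → ℝ)} {a : ℝ}
    (hE : ∀ x ∈ E, x ⬝ᵥ A *ᵥ x ≤ a) :
    ∑ σ : Fin n → Bool, E.indicator (isingWt A β B) (spinVec n σ)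
      ≤ (2 * cosh B) ^ n * exp (β / 2 * a) := by
  rw [← sum_exp_spinVec, sum_mul]
  refine sum_le_sum fun σ _ => ?_
  by_cases hσ : spinVec n σ ∈ E
  · rw [Set.indicator_of_mem hσ, isingWt_eq_exp_mul_exp]
    gcongr
    exact hE _ hσ
  · rw [Set.indicator_of_notMem hσ]
    positivity

lemma isingProb_le_exp (hβ : 0 ≤ β) (hdiag : ∀ i, A i i = 0) {E : Set (Fin n → ℝ)} {a : ℝ}
    (hE : ∀ x ∈ E, x ⬝ᵥ A *ᵥ x ≤ a) :
    isingProb A β B E ≤ exp (β / 2 * (a - tanh B ^ 2 * ∑ i, ∑ j, A i j)) := by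
  have hW : 0 < (2 * cosh B) ^ n := pow_pos (mul_pos two_pos (cosh_pos B)) n
  calc isingProb A β B E
      ≤ (2 * cosh B) ^ n * exp (β / 2 * a) /
          ((2 * cosh B) ^ n * exp (β / 2 * (tanh B ^ 2 * ∑ i, ∑ j, A i j))) :=
        div_le_div₀ (by positivity) (sum_indicator_isingWt_le hβ hE) (by positivity)
          (pow_mul_exp_le_sum_isingWt hdiag)
    _ = _ := by rw [mul_div_mul_left _ _ hW.ne', ← exp_sub, mul_sub]

lemma abs_energy_spinVec_le (hA : ∀ i j, 0 ≤ A i j) (σ : Fin n → Bool) :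
    |β / 2 * ∑ i, ∑ j, A i j * spinVec n σ i * spinVec n σ j + B * ∑ i, spinVec n σ i|
      ≤ |β| / 2 * ∑ i, ∑ j, A i j + |B| * n := by
  have hQ : |∑ i, ∑ j, A i j * spinVec n σ i * spinVec n σ j| ≤ ∑ i, ∑ j, A i j := by
    refine (abs_sum_le_sum_abs _ _).trans (sum_le_sum fun i _ => ?_)
    refine (abs_sum_le_sum_abs _ _).trans (sum_le_sum fun j _ => ?_)
    rw [abs_mul, abs_mul, abs_of_nonneg (hA i j)]
    exact (mul_le_of_le_one_right (mul_nonneg (hA i j) (abs_nonneg _)) (abs_spinVec_le σ j)).trans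
      (mul_le_of_le_one_right (hA i j) (abs_spinVec_le σ i))
  have hs : |∑ i, spinVec n σ i| ≤ n :=
    calc |∑ i, spinVec n σ i| ≤ ∑ _i : Fin n, (1 : ℝ) :=
          (abs_sum_le_sum_abs _ _).trans (sum_le_sum fun i _ => abs_spinVec_le σ i)
      _ = n := by simp
  calc _ ≤ |β / 2 * ∑ i, ∑ j, A i j * spinVec n σ i * spinVec n σ j| + |B * ∑ i, spinVec n σ i| :=
        abs_add_le _ _
    _ ≤ _ := by
      rw [abs_mul, abs_mul, abs_div, abs_two]
      gcongr

lemma exp_neg_le_isingProb (hA : ∀ i j, 0 ≤ A i j) {E : Set (Fin n → ℝ)} {σ : Fin n → Bool}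
    (hσ : spinVec n σ ∈ E) :
    exp (-(n * log 2 + 2 * (|β| / 2 * ∑ i, ∑ j, A i j + |B| * n))) ≤ isingProb A β B E := by
  set K := |β| / 2 * ∑ i, ∑ j, A i j + |B| * n
  have hwt (τ : Fin n → Bool) : isingWt A β B (spinVec n τ) ∈ Set.Icc (exp (-K)) (exp K) := by
    have := abs_le.mp (abs_energy_spinVec_le (β := β) (B := B) hA τ)
    exact ⟨exp_le_exp.mpr this.1, exp_le_exp.mpr this.2⟩
  have hZ : ∑ τ : Fin n → Bool, isingWt A β B (spinVec n τ) ≤ exp (n * log 2) * exp K := by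
    calc _ ≤ ∑ _τ : Fin n → Bool, exp K := sum_le_sum fun τ _ => (hwt τ).2
      _ = _ := by simp [exp_nat_mul, exp_log two_pos]
  have hN : exp (-K) ≤ ∑ τ : Fin n → Bool, E.indicator (isingWt A β B) (spinVec n τ) := by
    refine (hwt σ).1.trans ?_
    rw [← Set.indicator_of_mem hσ (isingWt A β B)]
    exact single_le_sum (f := fun τ => E.indicator (isingWt A β B) (spinVec n τ))
      (fun τ _ => Set.indicator_nonneg (fun _ _ => (exp_pos _).le) _) (mem_univ σ)
  calc exp (-(n * log 2 + 2 * K)) = exp (-K) / (exp (n * log 2) * exp K) := by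
        rw [← exp_add, ← exp_sub]; ring_nf
    _ ≤ isingProb A β B E :=
      div_le_div₀ ((exp_pos _).le.trans hN) hN (sum_pos (fun τ _ => exp_pos _) univ_nonempty) hZ

lemma one_div_mul_log_isingProb_mem_Icc (hA : ∀ i j, 0 ≤ A i j) (hsymm : A.IsSymm)
    (hdiag : ∀ i, A i i = 0) {γ : ℝ} (hγ : 0 ≤ γ) (hrow : ∀ i, ∑ j, A i j ≤ γ) (hβ : 0 ≤ β)
    (hn : 0 < n) {δ : ℝ} (hγδ : 4 * γ < n * δ) (hδA : 2 * δ * n ≤ tanh B ^ 2 * ∑ i, ∑ j, A i j) :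
    1 / (n : ℝ) * log (isingProb A β B {x | |x ⬝ᵥ A *ᵥ x| < n * δ})
      ∈ Set.Icc (-(log 2 + |β| * γ + 2 * |B|)) (-(β * δ / 2)) := by
  have hAγ : ∑ i, ∑ j, A i j ≤ n * γ := by
    simpa using sum_le_card_nsmul univ _ γ fun i _ => hrow i
  obtain ⟨σ, hσ⟩ := exists_abs_spinVec_dotProduct_mulVec_le hA hsymm hdiag hγ hrow
  refine one_div_mul_log_mem_Icc (by exact_mod_cast hn)
    ((exp_neg_le_isingProb hA (σ := σ) (hσ.trans_lt hγδ)).trans' ?_)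
    ((isingProb_le_exp hβ hdiag fun x hx => (le_abs_self _).trans hx.le).trans ?_)
  · gcongr
    nlinarith [mul_le_mul_of_nonneg_left hAγ (abs_nonneg β)]
  · gcongr
    nlinarith [mul_le_mul_of_nonneg_left hδA hβ]

end IsingBounds

lemma exists_pos_eventually_mul_le_of_liminf_pos {f : ℕ → ℝ} (hf : ∀ n, 0 ≤ f n)
    (h : 0 < liminf (fun n : ℕ => (1 / (n : ℝ)) * f n) atTop) :
    ∃ c > 0, ∀ᶠ n : ℕ in atTop, c * n ≤ f n := by
  have hbdd : IsBoundedUnder (· ≥ ·) atTop fun n : ℕ => (1 / (n : ℝ)) * f n :=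
    isBoundedUnder_of_eventually_ge (Eventually.of_forall fun n => by have := hf n; positivity)
  refine ⟨_, half_pos h, ?_⟩
  filter_upwards [eventually_lt_of_lt_liminf (half_lt_self h) hbdd, eventually_gt_atTop 0]
    with n hlt hn
  rw [one_div, inv_mul_eq_div, lt_div_iff₀ (by exact_mod_cast hn)] at hlt
  exact hlt.le

lemma limsup_le_of_eventually_mem_Icc {u : ℕ → ℝ} {a b : ℝ}
    (h : ∀ᶠ n in atTop, u n ∈ Set.Icc a b) : limsup u atTop ≤ b :=
  limsup_le_of_le (isCoboundedUnder_le_of_eventually_le atTop (h.mono fun _ h => h.1))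
    (h.mono fun _ h => h.2)

/-- exponential lower-tail bound for `|∑ᵢ Xᵢ mᵢ(X)|`. -/
theorem stmt14 (A : (n : ℕ) → Matrix (Fin n) (Fin n) ℝ)
    (hsymm : ∀ n, (A n).IsSymm)
    (hnonneg : ∀ n, ∀ i j : Fin n, 0 ≤ A n i j)
    (hdiag : ∀ n, ∀ i : Fin n, A n i i = 0)
    (hBD : ∃ γ : ℝ, ∀ n, ∀ i : Fin n, (∑ j, A n i j) ≤ γ)
    (hNT : 0 < liminf (fun n : ℕ => (1 / (n : ℝ)) * ∑ i, ∑ j, A n i j) atTop)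
    (β₀ B₀ : ℝ) (hβ : 0 < β₀) (hB : B₀ ≠ 0) :
    ∃ δ > (0 : ℝ),
      limsup (fun n : ℕ => (1 / (n : ℝ)) * Real.log (isingProb (A n) β₀ B₀
        {x | |∑ i, x i * mloc (A n) x i| < (n : ℝ) * δ})) atTop < 0 := by
  obtain ⟨γ, hγ, hrow⟩ : ∃ γ ≥ 0, ∀ n, ∀ i : Fin n, ∑ j, A n i j ≤ γ :=
    let ⟨γ, h⟩ := hBD
    ⟨max γ 0, le_max_right _ _, fun n i => (h n i).trans (le_max_left _ _)⟩
  obtain ⟨c, hc, hA⟩ := exists_pos_eventually_mul_le_of_liminf_pos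
    (fun n => sum_nonneg fun i _ => sum_nonneg fun j _ => hnonneg n i j) hNT
  have ht : tanh B₀ ≠ 0 := by
    rw [tanh_eq_sinh_div_cosh]; exact div_ne_zero (sinh_ne_zero.mpr hB) (cosh_pos B₀).ne'
  set δ := tanh B₀ ^ 2 * c / 2 with hδ
  have hδpos : 0 < δ := by positivity
  refine ⟨δ, hδpos, ?_⟩
  refine (limsup_le_of_eventually_mem_Icc (a := -(log 2 + |β₀| * γ + 2 * |B₀|))
    (b := -(β₀ * δ / 2)) ?_).trans_lt (neg_neg_of_pos (by positivity))
  filter_upwards [hA, eventually_gt_atTop 0,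
    (tendsto_natCast_atTop_atTop.atTop_mul_const hδpos).eventually_gt_atTop (4 * γ)]
    with n hAn hn hγn
  simp only [sum_mul_mloc]
  refine one_div_mul_log_isingProb_mem_Icc (hnonneg n) (hsymm n) (hdiag n) hγ (hrow n) hβ.le hn
    hγn ?_
  rw [hδ]
  nlinarith [mul_le_mul_of_nonneg_left hAn (sq_nonneg (tanh B₀))]
end
end
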